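/- Fix ε, δ ∈ (0,1) and L Pauli observables with max_ℓ w(o_ℓ) ≤ w. If M ≥ 3^w · 2 log(2L/δ) / ν with ν = 1 − exp(−ε²/2), then M i.i.d. uniformly random Pauli measurements satisfy E_P[Conf_ε(O;P)] ≤ δ/2. In particular, since ν ≥ ε²/2 · (1 − ε²/4) ≥ ε²/4 for ε ∈ (0,1), a measurement budget M = O(3^w log(L/δ)/ε²) suffices. -/

import Mathlib

/-!
The M measurements are independent, so the expectation of exp(-c · hitCount) factorizes into
M copies of a single-measurement average. A uniform Pauli basis hits an observable of weight k
with probability 3^(-k), hence each factor is 1 - ν/3^k ≤ exp(-ν/3^w). Summing over the L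
observables and inserting the budget on M gives δ/2.
-/

inductive Pauli | I | X | Y | Z
deriving DecidableEq

instance instFintypePauli : Fintype Pauli :=
  ⟨{Pauli.I, Pauli.X, Pauli.Y, Pauli.Z}, by intro x; cases x <;> decide⟩

inductive Axis | X | Y | Z
deriving DecidableEq

instance instFintypeAxis : Fintype Axis :=
  ⟨{Axis.X, Axis.Y, Axis.Z}, by intro x; cases x <;> decide⟩

def Axis.toPauli : Axis → Pauli
  | .X => .X
  | .Y => .Y
  | .Z => .Z

/-- single-qubit hitting relation: `o = I` or `o = p`. -/
def hit1 (o : Pauli) (p : Axis) : Prop := o = Pauli.I ∨ o = p.toPauli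

instance (o : Pauli) (p : Axis) : Decidable (hit1 o p) := by unfold hit1; infer_instance

/-- `o ▷ p`: every coordinate of `o` is `I` or matches `p`. -/
def hits {n : ℕ} (o : Fin n → Pauli) (p : Fin n → Axis) : Prop := ∀ k, hit1 (o k) (p k)

instance {n : ℕ} (o : Fin n → Pauli) (p : Fin n → Axis) : Decidable (hits o p) := by
  unfold hits; infer_instance

/-- weight: number of non-identity coordinates. -/
def weight {n : ℕ} (o : Fin n → Pauli) : ℕ :=
  (Finset.univ.filter (fun k => o k ≠ Pauli.I)).card

/-- hitting count of `o` among the measurements `P`. -/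
def hitCount {n M : ℕ} (o : Fin n → Pauli) (P : Fin M → Fin n → Axis) : ℕ :=
  (Finset.univ.filter (fun m => hits o (P m))).card

/-- the confidence bound. -/
noncomputable def Conf {n M L : ℕ} (ε : ℝ) (O : Fin L → Fin n → Pauli)
    (P : Fin M → Fin n → Axis) : ℝ :=
  ∑ ℓ, Real.exp (-(ε ^ 2 / 2) * (hitCount (O ℓ) P))

open Finset Real

instance : Nonempty Axis := ⟨.X⟩

@[simp] lemma card_axis : Fintype.card Axis = 3 := rfl

lemma card_filter_hit1 (o : Pauli) : #{a | hit1 o a} = if o = .I then 3 else 1 := by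
  cases o <;> decide

lemma card_filter_hits_mul_three_pow_weight {n : ℕ} (o : Fin n → Pauli) :
    #{p | hits o p} * 3 ^ weight o = 3 ^ n := by
  have hhits : ({p | hits o p} : Finset (Fin n → Axis))
      = Fintype.piFinset fun k => {a | hit1 (o k) a} := by
    ext p
    simp only [mem_filter, mem_univ, true_and, Fintype.mem_piFinset]
    rfl
  have hweight : 3 ^ weight o = ∏ k, if o k ≠ .I then 3 else 1 := by
    rw [prod_ite, prod_const_one, mul_one, prod_const, weight]
  rw [hhits, Fintype.card_piFinset, hweight, ← prod_mul_distrib]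
  simp_rw [card_filter_hit1]
  simp only [ne_eq, ite_not]
  calc ∏ k, ((if o k = .I then 3 else 1) * if o k = .I then 1 else 3) = ∏ _k : Fin n, 3 :=
        prod_congr rfl fun k _ => by split_ifs <;> rfl
    _ = 3 ^ n := by simp

lemma sum_pi_exp_neg_mul_card_filter {α : Type*} [Fintype α] (p : α → Prop) [DecidablePred p]
    (c : ℝ) (M : ℕ) :
    ∑ P : Fin M → α, exp (-c * #{m | p (P m)}) = (∑ a, if p a then exp (-c) else 1) ^ M := by
  rw [Fintype.sum_pow]
  refine sum_congr rfl fun P _ => ?_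
  rw [card_filter, Nat.cast_sum, mul_sum, exp_sum]
  refine prod_congr rfl fun m _ => ?_
  split_ifs <;> simp

lemma sum_ite_exp_neg_eq {α : Type*} [Fintype α] (p : α → Prop) [DecidablePred p] (c : ℝ) :
    ∑ a, (if p a then exp (-c) else 1) = Fintype.card α - #{a | p a} * (1 - exp (-c)) := by
  have hsplit := card_filter_add_card_filter_not (s := (univ : Finset α)) (p := p)
  rw [card_univ] at hsplit
  rw [sum_ite, sum_const, sum_const, nsmul_eq_mul, nsmul_eq_mul, ← hsplit]
  push_cast
  ring

lemma sum_pi_exp_neg_mul_card_filter_div {α : Type*} [Fintype α] [Nonempty α] (p : α → Prop)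
    [DecidablePred p] (c : ℝ) (M : ℕ) :
    (∑ P : Fin M → α, exp (-c * #{m | p (P m)})) / Fintype.card (Fin M → α)
      = (1 - #{a | p a} / Fintype.card α * (1 - exp (-c))) ^ M := by
  have hα : (Fintype.card α : ℝ) ≠ 0 := by positivity
  rw [sum_pi_exp_neg_mul_card_filter, sum_ite_exp_neg_eq, Fintype.card_fun, Fintype.card_fin,
    Nat.cast_pow, ← div_pow]
  congr 1
  field_simp

lemma sum_exp_neg_mul_hitCount_div {n : ℕ} (o : Fin n → Pauli) (c : ℝ) (M : ℕ) :
    (∑ P : Fin M → Fin n → Axis, exp (-c * hitCount o P)) / Fintype.card (Fin M → Fin n → Axis)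
      = (1 - (1 - exp (-c)) / 3 ^ weight o) ^ M := by
  have hprob : (#{p | hits o p} : ℝ) / Fintype.card (Fin n → Axis) = 1 / 3 ^ weight o := by
    rw [div_eq_div_iff (by positivity) (by positivity)]
    exact_mod_cast (card_filter_hits_mul_three_pow_weight o).trans (by simp)
  simp only [hitCount]
  rw [sum_pi_exp_neg_mul_card_filter_div (hits o) c M, hprob, one_div_mul_eq_div]

lemma one_sub_pow_le_exp_neg_mul {x : ℝ} (hx : x ≤ 1) (M : ℕ) : (1 - x) ^ M ≤ exp (-(M * x)) :=
  calc (1 - x) ^ M ≤ exp (-x) ^ M := pow_le_pow_left₀ (by linarith) (one_sub_le_exp_neg x) M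
    _ = exp (-(M * x)) := by rw [← exp_nat_mul, mul_neg]

lemma mul_exp_neg_le_half {L δ t : ℝ} (hδ : 0 < δ) (ht : 0 ≤ t) (h : 2 * log (2 * L / δ) ≤ t) :
    L * exp (-t) ≤ δ / 2 := by
  have hexp : 2 * L / δ ≤ exp t := (le_exp_log _).trans (exp_le_exp.2 (by linarith))
  rw [div_le_iff₀ hδ] at hexp
  rw [exp_neg, ← div_eq_mul_inv, div_le_iff₀ (exp_pos t)]
  linarith

lemma sum_exp_neg_mul_hitCount_div_le {n w : ℕ} {o : Fin n → Pauli} (hw : weight o ≤ w) {c : ℝ}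
    (hc : 0 ≤ c) (M : ℕ) :
    (∑ P : Fin M → Fin n → Axis, exp (-c * hitCount o P)) / Fintype.card (Fin M → Fin n → Axis)
      ≤ exp (-(M * ((1 - exp (-c)) / 3 ^ w))) := by
  have hν : 0 ≤ 1 - exp (-c) := sub_nonneg.2 (exp_le_one_iff.2 (neg_nonpos.2 hc))
  have hν' : 1 - exp (-c) ≤ 1 := sub_le_self _ (exp_pos _).le
  rw [sum_exp_neg_mul_hitCount_div]
  refine (one_sub_pow_le_exp_neg_mul ?_ M).trans ?_
  · exact div_le_one_of_le₀ (hν'.trans (one_le_pow₀ (by norm_num))) (by positivity)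
  · gcongr
    norm_num

theorem stmt8_general {n : ℕ} (M L w : ℕ) (O : Fin L → Fin n → Pauli)
    (hw : ∀ ℓ, weight (O ℓ) ≤ w)
    (ε δ : ℝ) (hε : ε ∈ Set.Ioo (0 : ℝ) 1) (hδ : δ ∈ Set.Ioo (0 : ℝ) 1)
    (hM : (3 : ℝ) ^ w * (2 * Real.log (2 * L / δ)) / (1 - Real.exp (-(ε ^ 2 / 2)))
            ≤ (M : ℝ)) :
    (∑ P : Fin M → Fin n → Axis, Conf ε O P)
        / (Fintype.card (Fin M → Fin n → Axis) : ℝ) ≤ δ / 2 := by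
  set ν := 1 - exp (-(ε ^ 2 / 2))
  have hν : 0 < ν := sub_pos.2 (exp_lt_one_iff.2 (by nlinarith [hε.1]))
  have hbudget : 2 * log (2 * L / δ) ≤ M * (ν / 3 ^ w) := by
    rw [div_le_iff₀ hν] at hM
    rw [mul_div_assoc', le_div_iff₀ (by positivity)]
    linarith
  calc (∑ P : Fin M → Fin n → Axis, Conf ε O P) / Fintype.card (Fin M → Fin n → Axis)
      = ∑ ℓ, (∑ P : Fin M → Fin n → Axis, exp (-(ε ^ 2 / 2) * hitCount (O ℓ) P))
          / Fintype.card (Fin M → Fin n → Axis) := by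
        simp only [Conf]
        rw [sum_comm, sum_div]
    _ ≤ ∑ _ℓ : Fin L, exp (-(M * (ν / 3 ^ w))) :=
        sum_le_sum fun ℓ _ => sum_exp_neg_mul_hitCount_div_le (hw ℓ) (by positivity) M
    _ = L * exp (-(M * (ν / 3 ^ w))) := by simp
    _ ≤ δ / 2 := mul_exp_neg_le_half hδ.1 (by positivity) hbudget

/-- measurement budget `M ≥ 3^w · 2 log(2L/δ)/ν` makes the expected
confidence bound at most `δ/2`. -/
theorem stmt8 {n : ℕ} (M L w : ℕ) (hL : 0 < L) (O : Fin L → Fin n → Pauli)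
    (hw : ∀ ℓ, weight (O ℓ) ≤ w)
    (ε δ : ℝ) (hε : ε ∈ Set.Ioo (0 : ℝ) 1) (hδ : δ ∈ Set.Ioo (0 : ℝ) 1)
    (hM : (3 : ℝ) ^ w * (2 * Real.log (2 * L / δ)) / (1 - Real.exp (-(ε ^ 2 / 2)))
            ≤ (M : ℝ)) :
    (∑ P : Fin M → Fin n → Axis, Conf ε O P)
        / (Fintype.card (Fin M → Fin n → Axis) : ℝ) ≤ δ / 2 :=
  stmt8_general M L w O hw ε δ hε hδ hM
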